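/- arXiv:2502.20115 — 6 statements merged into one kernel-verified Lean document; each statement's English description precedes it below -/
import Mathlib

section
/- Let W = D⁻¹(I − B) and W' = D'⁻¹(I − B') where D, D' ∈ ℝ^{p×p} are diagonal matrices with strictly positive diagonal entries and B, B' ∈ ℝ^{p×p} are DAG matrices. Let Q ∈ ℝ^{p×p} be a signed permutation matrix. If W' = Qᵀ W, then Q = I, D' = D, and B' = B. -/
open Matrix

/-- `B` is a DAG matrix: `B = Pᵀ T P` for a permutation matrix `P` and a strictly
lower triangular matrix `T`. -/
def IsDAGMatrix {p : ℕ} (B : Matrix (Fin p) (Fin p) ℝ) : Prop :=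
  ∃ (σ : Equiv.Perm (Fin p)) (T : Matrix (Fin p) (Fin p) ℝ),
    (∀ k l : Fin p, k ≤ l → T k l = 0) ∧
    B = (σ.permMatrix ℝ)ᵀ * T * σ.permMatrix ℝ

/-- `Q` is a signed permutation matrix. -/
def IsSignedPermMatrix {p : ℕ} (Q : Matrix (Fin p) (Fin p) ℝ) : Prop :=
  ∃ (σ : Equiv.Perm (Fin p)) (ε : Fin p → ℝ),
    (∀ i, ε i = 1 ∨ ε i = -1) ∧
    Q = Matrix.of fun i j => if j = σ i then ε i else 0


-- auxiliary: DAG matrix entry facts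
lemma dag_facts {p : ℕ} {B : Matrix (Fin p) (Fin p) ℝ} (hB : ∃ (σ : Equiv.Perm (Fin p)) (T : Matrix (Fin p) (Fin p) ℝ),
    (∀ k l : Fin p, k ≤ l → T k l = 0) ∧
    B = (σ.permMatrix ℝ)ᵀ * T * σ.permMatrix ℝ) :
    ∃ π : Equiv.Perm (Fin p), (∀ i, B i i = 0) ∧ ∀ k l, B k l ≠ 0 → π l < π k := by
  obtain ⟨σ, T, hT, rfl⟩ := hB
  refine ⟨σ.symm, ?_, ?_⟩
  · intro i
    have : ((σ.permMatrix ℝ)ᵀ * T * σ.permMatrix ℝ) i i = T (σ.symm i) (σ.symm i) := by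
      rw [Equiv.Perm.permMatrix, ← PEquiv.toMatrix_symm, ← Equiv.toPEquiv_symm,
        PEquiv.toMatrix_toPEquiv_mul, PEquiv.mul_toMatrix_toPEquiv]
      simp [Matrix.submatrix_apply]
    rw [this, hT _ _ le_rfl]
  · intro k l hkl
    have he : ((σ.permMatrix ℝ)ᵀ * T * σ.permMatrix ℝ) k l = T (σ.symm k) (σ.symm l) := by
      rw [Equiv.Perm.permMatrix, ← PEquiv.toMatrix_symm, ← Equiv.toPEquiv_symm,
        PEquiv.toMatrix_toPEquiv_mul, PEquiv.mul_toMatrix_toPEquiv]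
      simp [Matrix.submatrix_apply]
    rw [he] at hkl
    by_contra h
    exact hkl (hT _ _ (not_lt.mp h))

lemma qt_mul_apply {p : ℕ} (σ : Equiv.Perm (Fin p)) (ε : Fin p → ℝ)
    (M : Matrix (Fin p) (Fin p) ℝ) (i j : Fin p) :
    ((Matrix.of fun i j => if j = σ i then ε i else 0)ᵀ * M) i j
      = ε (σ.symm i) * M (σ.symm i) j := by
  rw [Matrix.mul_apply]
  rw [Finset.sum_eq_single (σ.symm i)]
  · simp
  · intro b _ hb
    have : i ≠ σ b := by
      intro h; exact hb (by simp [h])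
    simp [Matrix.transpose_apply, this]
  · simp

lemma diaginv_mul_apply {p : ℕ} {D : Matrix (Fin p) (Fin p) ℝ} (hD : D.IsDiag)
    (hDpos : ∀ i, 0 < D i i) (M : Matrix (Fin p) (Fin p) ℝ) (i j : Fin p) :
    (D⁻¹ * M) i j = (D i i)⁻¹ * M i j := by
  have hDeq : D = Matrix.diagonal D.diag := hD.diagonal_diag.symm
  have h1 : D⁻¹ = Matrix.diagonal fun i => (D i i)⁻¹ := by
    refine Matrix.inv_eq_left_inv ?_
    conv_lhs => rw [hDeq]
    rw [Matrix.diagonal_mul_diagonal]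
    ext a b
    rcases eq_or_ne a b with rfl | hab
    · simp [Matrix.diag, inv_mul_cancel₀ (hDpos a).ne']
    · simp [Matrix.diagonal_apply_ne _ hab, Matrix.one_apply_ne hab]
  rw [h1, Matrix.diagonal_mul]

theorem stmt0 {p : ℕ} (D D' B B' Q : Matrix (Fin p) (Fin p) ℝ)
    (hD : D.IsDiag) (hDpos : ∀ i, 0 < D i i)
    (hD' : D'.IsDiag) (hD'pos : ∀ i, 0 < D' i i)
    (hB : IsDAGMatrix B) (hB' : IsDAGMatrix B')
    (hQ : IsSignedPermMatrix Q)
    (hW : D'⁻¹ * (1 - B') = Qᵀ * (D⁻¹ * (1 - B))) :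
    Q = 1 ∧ D' = D ∧ B' = B := by
  obtain ⟨πB, hBdiag, hBlt⟩ := dag_facts hB
  obtain ⟨πB', hB'diag, hB'lt⟩ := dag_facts hB'
  obtain ⟨σ, ε, hε, rfl⟩ := hQ
  have E : ∀ i j, (D' i i)⁻¹ * ((1 - B') i j)
      = ε (σ.symm i) * ((D (σ.symm i) (σ.symm i))⁻¹ * ((1 - B) (σ.symm i) j)) := by
    intro i j
    have h := congrFun (congrFun hW i) j
    rwa [diaginv_mul_apply hD' hD'pos, qt_mul_apply, diaginv_mul_apply hD hDpos] at h
  have Ediag : ∀ i, (D' i i)⁻¹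
      = ε (σ.symm i) * ((D (σ.symm i) (σ.symm i))⁻¹ * ((1 - B) (σ.symm i) i)) := by
    intro i
    have h := E i i
    rwa [Matrix.sub_apply, Matrix.one_apply_eq, hB'diag, sub_zero, mul_one] at h
  have hlt' : ∀ i, σ.symm i ≠ i → πB i < πB (σ.symm i) := by
    intro i h
    have hne : (1 - B) (σ.symm i) i ≠ 0 := by
      intro h0
      have hd := Ediag i
      rw [h0, mul_zero, mul_zero] at hd
      exact (inv_pos.mpr (hD'pos i)).ne' hd
    have hBne : B (σ.symm i) i ≠ 0 := by
      intro h0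
      apply hne
      simp [Matrix.sub_apply, Matrix.one_apply_ne h, h0]
    exact hBlt _ _ hBne
  have hfix : ∀ i, σ.symm i = i := by
    by_contra hc
    push_neg at hc
    obtain ⟨j, hj⟩ := hc
    have hsum : ∑ i, ((πB i : ℕ)) < ∑ i, ((πB (σ.symm i) : ℕ)) := by
      refine Finset.sum_lt_sum (fun i _ => ?_) ⟨j, Finset.mem_univ j, ?_⟩
      · rcases eq_or_ne (σ.symm i) i with h | h
        · rw [h]
        · exact le_of_lt (hlt' i h)
      · exact hlt' j hj
    have heq : ∑ i, ((πB (σ.symm i) : ℕ)) = ∑ i, ((πB i : ℕ)) :=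
      Equiv.sum_comp σ.symm (fun i => (πB i : ℕ))
    rw [heq] at hsum
    exact lt_irrefl _ hsum
  have hσ : ∀ i, σ i = i := by
    intro i
    have h := hfix (σ i)
    rw [Equiv.symm_apply_apply] at h
    exact h.symm
  have hε1 : ∀ i, ε i = 1 := by
    intro i
    have h := Ediag i
    rw [hfix i, Matrix.sub_apply, Matrix.one_apply_eq, hBdiag, sub_zero, mul_one] at h
    rcases hε i with he | he
    · exact he
    · exfalso
      rw [he] at h
      nlinarith [inv_pos.mpr (hDpos i), inv_pos.mpr (hD'pos i)]
  have hQ1 : (Matrix.of fun i j => if j = σ i then ε i else 0)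
      = (1 : Matrix (Fin p) (Fin p) ℝ) := by
    ext i j
    rw [Matrix.of_apply, hσ i, hε1 i, Matrix.one_apply]
    simp [eq_comm]
  have E' : ∀ i j, (D' i i)⁻¹ * ((1 - B') i j) = (D i i)⁻¹ * ((1 - B) i j) := by
    intro i j
    have h := E i j
    rwa [hfix i, hε1 i, one_mul] at h
  have hDD : ∀ i, D' i i = D i i := by
    intro i
    have h := E' i i
    simp only [Matrix.sub_apply, Matrix.one_apply_eq, hBdiag, hB'diag, sub_zero,
      mul_one] at h
    exact inv_injective h
  have hD'D : D' = D := by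
    ext i j
    rcases eq_or_ne i j with rfl | hij
    · exact hDD i
    · rw [hD' hij, hD hij]
  have hB'B : B' = B := by
    ext i j
    have h := E' i j
    rw [hDD i] at h
    have h2 := mul_left_cancel₀ (inv_ne_zero (hDpos i).ne') h
    rw [Matrix.sub_apply, Matrix.sub_apply] at h2
    linarith
  exact ⟨hQ1, hD'D, hB'B⟩
end

section
/- Let P, P' ∈ ℝ^{p×p} be permutation matrices and T, T' ∈ ℝ^{p×p} be strictly lower triangular matrices such that Pᵀ T P = P'ᵀ T' P'. Assume that every entry of T strictly below the diagonal is nonzero (i.e., T_{k,l} ≠ 0 for all k > l). Then P = P' and T = T'. -/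
open Matrix

theorem stmt1 {p : ℕ} (P P' T T' : Matrix (Fin p) (Fin p) ℝ)
    (hP : ∃ σ : Equiv.Perm (Fin p), P = σ.permMatrix ℝ)
    (hP' : ∃ σ : Equiv.Perm (Fin p), P' = σ.permMatrix ℝ)
    (hT : ∀ k l : Fin p, k ≤ l → T k l = 0)
    (hT' : ∀ k l : Fin p, k ≤ l → T' k l = 0)
    (hTfull : ∀ k l : Fin p, l < k → T k l ≠ 0)
    (h : Pᵀ * T * P = P'ᵀ * T' * P') :
    P = P' ∧ T = T' := by
  obtain ⟨σ, rfl⟩ := hP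
  obtain ⟨τ, rfl⟩ := hP'
  have key : ∀ (ρ : Equiv.Perm (Fin p)) (M : Matrix (Fin p) (Fin p) ℝ) (i j : Fin p),
      ((ρ.permMatrix ℝ)ᵀ * M * ρ.permMatrix ℝ) i j = M (ρ⁻¹ i) (ρ⁻¹ j) := by
    intro ρ M i j
    have h1 : (ρ.permMatrix ℝ)ᵀ = (ρ⁻¹).permMatrix ℝ := by
      rw [Equiv.Perm.permMatrix, Equiv.Perm.permMatrix, ← PEquiv.toMatrix_symm,
        ← Equiv.toPEquiv_symm]
      rfl
    rw [h1, Equiv.Perm.permMatrix, Equiv.Perm.permMatrix,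
      PEquiv.toMatrix_toPEquiv_mul, PEquiv.mul_toMatrix_toPEquiv]
    rfl
  have h2 : ∀ a b : Fin p, T a b = T' (τ⁻¹ (σ a)) (τ⁻¹ (σ b)) := by
    intro a b
    have := congrFun (congrFun h (σ a)) (σ b)
    rw [key σ T, key τ T'] at this
    simpa using this
  set π : Equiv.Perm (Fin p) := σ.trans τ⁻¹ with hπdef
  have hπmono : StrictMono π := by
    intro b a hba
    by_contra hle
    push_neg at hle
    exact hTfull a b hba (by rw [h2 a b]; exact hT' _ _ hle)
  have hπid : (π : Fin p → Fin p) = id := by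
    refine (@StrictMono.range_inj (Fin p) (Fin p) _ _ (inferInstance : WellFoundedLT (Fin p)) _ id hπmono strictMono_id).1 ?_
    rw [Set.range_id, (Equiv.surjective π).range_eq]
  have hfix : ∀ a : Fin p, τ⁻¹ (σ a) = a := fun a => by
    simpa [hπdef] using congrFun hπid a
  have hστ : σ = τ := by
    apply Equiv.ext
    intro a
    have := congrArg τ (hfix a)
    simpa using this
  constructor
  · rw [hστ]
  · ext a b
    rcases lt_or_ge b a with hba | hab
    · rw [h2 a b, hfix a, hfix b]
    · rw [hT a b hab, hT' a b hab]
end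

section
/- Let Σ_x and Σ̃_e be m × m real symmetric positive definite matrices with all diagonal entries equal to 1. Let B = diag(b₁, …, b_m) and L = diag(l₁, …, l_m) be diagonal matrices with entries in [−1, 1] satisfying B² + L² = I. Then J(B, L) ≥ 0, where J(B, L) := − log det Σ_x − log det Σ̃_e + log det(B Σ_x B + L Σ̃_e L) + log det(L Σ_x L + B Σ̃_e B). -/
/-!
Let `U = [[B, L], [L, -B]]`; since `B`, `L` are commuting diagonal matrices with `B² + L² = I`,
`U` is orthogonal. Conjugating `S = diag(Σx, Σ̃e)` by `U` gives the block matrix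
`[[A, C], [Cᵀ, D]]` with `A = BΣxB + LΣ̃eL` and `D = LΣxL + BΣ̃eB`, so by Fischer's inequality
`det Σx · det Σ̃e = det (Uᵀ S U) ≤ det A · det D`, which is `J(B, L) ≥ 0` after taking logarithms.
Fischer's inequality follows from the Schur complement formula
`det = det A · det (D - Cᵀ A⁻¹ C)` and the monotonicity of `det` on positive semidefinite matrices.
-/

open Matrix

namespace Matrix

lemma fromCols_conjTranspose_mul_mul_fromCols {ι n n' R : Type*} [Fintype ι] [Semiring R]
    [Star R] (S : Matrix ι ι R) (W : Matrix ι n R) (V : Matrix ι n' R) :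
    (fromCols W V)ᴴ * S * fromCols W V =
      fromBlocks (Wᴴ * S * W) (Wᴴ * S * V) (Vᴴ * S * W) (Vᴴ * S * V) := by
  rw [conjTranspose_fromCols_eq_fromRows_conjTranspose, fromRows_mul, fromRows_mul_fromCols]

variable {n n' : Type*} [Fintype n] [DecidableEq n] [Fintype n'] [DecidableEq n']

open scoped MatrixOrder in
lemma PosSemidef.one_le_det_one_add {M : Matrix n n ℝ} (hM : M.PosSemidef) :
    1 ≤ (1 + M).det := by
  have hH := (PosSemidef.one.add hM).isHermitian
  rw [hH.det_eq_prod_eigenvalues]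
  refine Finset.one_le_prod fun i _ => ?_
  have hi : hH.eigenvalues i + -1 ∈ spectrum ℝ M := by
    rw [spectrum.add_mem_iff, map_neg, map_one, neg_neg]
    exact hH.eigenvalues_mem_spectrum_real i
  have := spectrum_nonneg_of_nonneg (nonneg_iff_posSemidef.mpr hM) hi
  simp only [RCLike.ofReal_real_eq_id, id_eq]
  linarith

open scoped MatrixOrder in
lemma PosSemidef.det_le_det_add {A B : Matrix n n ℝ} (hA : A.PosSemidef) (hB : B.PosSemidef) :
    A.det ≤ (A + B).det := by
  rcases eq_or_ne A.det 0 with hA0 | hA0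
  · exact hA0 ▸ (hA.add hB).det_nonneg
  have hApos : A.PosDef := (hA.posDef_iff_det_ne_zero).mpr hA0
  set R := CFC.sqrt B
  have hR : Rᴴ = R := (nonneg_iff_posSemidef.mp (CFC.sqrt_nonneg B)).isHermitian
  -- `A + R * R = A (1 + R A⁻¹ R)` with `R A⁻¹ R = Rᴴ A⁻¹ R` positive semidefinite
  have hRR : R * R = B := CFC.sqrt_mul_sqrt_self B (nonneg_iff_posSemidef.mpr hB)
  have hM : (R * A⁻¹ * R).PosSemidef := by
    simpa only [hR] using hApos.inv.posSemidef.conjTranspose_mul_mul_same R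
  calc A.det = A.det * 1 := (mul_one _).symm
    _ ≤ A.det * (1 + R * A⁻¹ * R).det := by
      gcongr
      · exact hA.det_nonneg
      · exact hM.one_le_det_one_add
    _ = (A + B).det := by rw [← hRR, det_add_mul _ _ hA0.isUnit]

lemma PosDef.det_fromBlocks_le {A : Matrix n n ℝ} {C : Matrix n n' ℝ} {D : Matrix n' n' ℝ}
    (hA : A.PosDef) (h : (fromBlocks A C Cᴴ D).PosSemidef) :
    (fromBlocks A C Cᴴ D).det ≤ A.det * D.det := by
  have := hA.isUnit.invertible
  rw [det_fromBlocks₁₁, invOf_eq_nonsing_inv]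
  gcongr
  · exact hA.det_pos.le
  · simpa using ((PosDef.fromBlocks₁₁ C D hA).mp h).det_le_det_add
      (hA.inv.posSemidef.conjTranspose_mul_mul_same C)

lemma PosDef.conjTranspose_mul_mul_same_of_isometry {ι : Type*} [Fintype ι] {S : Matrix ι ι ℝ}
    (hS : S.PosDef) {W : Matrix ι n ℝ} (hW : Wᴴ * W = 1) : (Wᴴ * S * W).PosDef :=
  hS.conjTranspose_mul_mul_same <| Function.LeftInverse.injective (g := Wᴴ.mulVec) fun x => by
    rw [mulVec_mulVec, hW, one_mulVec]

lemma PosDef.det_le_det_conj_mul_det_conj {S : Matrix (n ⊕ n') (n ⊕ n') ℝ} (hS : S.PosDef)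
    {W : Matrix (n ⊕ n') n ℝ} {V : Matrix (n ⊕ n') n' ℝ}
    (hU : (fromCols W V)ᴴ * fromCols W V = 1) :
    S.det ≤ (Wᴴ * S * W).det * (Vᴴ * S * V).det := by
  have hW : Wᴴ * W = 1 := by
    rw [← Matrix.mul_one (fromCols W V)ᴴ, fromCols_conjTranspose_mul_mul_fromCols,
      ← fromBlocks_one, fromBlocks_inj] at hU
    simpa using hU.1
  have hconj := fromCols_conjTranspose_mul_mul_fromCols S W V
  rw [show Vᴴ * S * W = (Wᴴ * S * V)ᴴ by
    rw [conjTranspose_mul, conjTranspose_mul, conjTranspose_conjTranspose, hS.isHermitian.eq,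
      Matrix.mul_assoc]] at hconj
  have hdet : ((fromCols W V)ᴴ * S * fromCols W V).det = S.det := by
    rw [det_mul, det_mul, mul_right_comm, ← det_mul, hU, det_one, one_mul]
  rw [← hdet, hconj]
  refine (hS.conjTranspose_mul_mul_same_of_isometry hW).det_fromBlocks_le ?_
  rw [← hconj]
  exact hS.posSemidef.conjTranspose_mul_mul_same _

lemma PosDef.fromBlocks_zero {A : Matrix n n ℝ} {D : Matrix n' n' ℝ} (hA : A.PosDef)
    (hD : D.PosDef) : (fromBlocks A 0 0 D).PosDef := by
  have := hD.isUnit.invertible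
  have hpsd : (fromBlocks A 0 0 D).PosSemidef := by
    simpa using (PosDef.fromBlocks₂₂ A (0 : Matrix n n' ℝ) hD).mpr (by simpa using hA.posSemidef)
  rw [hpsd.posDef_iff_det_ne_zero, det_fromBlocks_zero₂₁]
  exact (mul_pos hA.det_pos hD.det_pos).ne'

lemma conjTranspose_fromRows_diagonal_mul_fromRows_diagonal {R : Type*} [CommSemiring R]
    [StarRing R] (b l b' l' : n → R) :
    (fromRows (diagonal b) (diagonal l))ᴴ * fromRows (diagonal b') (diagonal l') =
      diagonal (star b * b' + star l * l') := by
  rw [conjTranspose_fromRows_eq_fromCols_conjTranspose, fromCols_mul_fromRows,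
    diagonal_conjTranspose, diagonal_conjTranspose, diagonal_mul_diagonal, diagonal_mul_diagonal,
    diagonal_add]
  rfl

lemma conjTranspose_fromRows_diagonal_mul_self {b l : n → ℝ} (hbl : ∀ i, b i ^ 2 + l i ^ 2 = 1) :
    (fromRows (diagonal b) (diagonal l))ᴴ * fromRows (diagonal b) (diagonal l) = 1 := by
  rw [conjTranspose_fromRows_diagonal_mul_fromRows_diagonal, ← diagonal_one]
  congr 1
  ext i
  simpa [sq] using hbl i

lemma conjTranspose_fromCols_rotation_mul_self {b l : n → ℝ} (hbl : ∀ i, b i ^ 2 + l i ^ 2 = 1) :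
    let U := fromCols (fromRows (diagonal b) (diagonal l)) (fromRows (diagonal l) (diagonal (-b)))
    Uᴴ * U = 1 := by
  intro U
  rw [← Matrix.mul_one Uᴴ, fromCols_conjTranspose_mul_mul_fromCols]
  simp only [Matrix.mul_one]
  have hlb : ∀ i, l i ^ 2 + (-b) i ^ 2 = 1 := by simpa [add_comm] using hbl
  rw [conjTranspose_fromRows_diagonal_mul_self hbl, conjTranspose_fromRows_diagonal_mul_self hlb,
    conjTranspose_fromRows_diagonal_mul_fromRows_diagonal,
    conjTranspose_fromRows_diagonal_mul_fromRows_diagonal, ← fromBlocks_one, ← diagonal_zero]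
  congr 2 <;> ext i <;> simp [mul_comm]

lemma diagonal_neg_mul_mul_diagonal_neg {R : Type*} [Ring R] (b : n → R) (X : Matrix n n R) :
    diagonal (-b) * X * diagonal (-b) = diagonal b * X * diagonal b := by
  rw [show diagonal (-b) = -diagonal b from (diagonal_neg b).symm, Matrix.mul_neg, Matrix.neg_mul,
    Matrix.neg_mul, neg_neg]

lemma conjTranspose_fromRows_diagonal_mul_fromBlocks_mul (b l : n → ℝ)
    (X Y : Matrix n n ℝ) :
    (fromRows (diagonal b) (diagonal l))ᴴ * fromBlocks X 0 0 Y * fromRows (diagonal b) (diagonal l)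
      = diagonal b * X * diagonal b + diagonal l * Y * diagonal l := by
  rw [conjTranspose_fromRows_eq_fromCols_conjTranspose, fromCols_mul_fromBlocks,
    fromCols_mul_fromRows]
  simp

end Matrix

theorem stmt2_general {m : ℕ} (Sx Se : Matrix (Fin m) (Fin m) ℝ)
    (hx : Sx.PosDef) (he : Se.PosDef)
    (b l : Fin m → ℝ)
    (hbl : ∀ i, b i ^ 2 + l i ^ 2 = 1) :
    0 ≤ - Real.log Sx.det - Real.log Se.det
      + Real.log (Matrix.diagonal b * Sx * Matrix.diagonal b
          + Matrix.diagonal l * Se * Matrix.diagonal l).det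
      + Real.log (Matrix.diagonal l * Sx * Matrix.diagonal l
          + Matrix.diagonal b * Se * Matrix.diagonal b).det := by
  have hlb : ∀ i, l i ^ 2 + (-b) i ^ 2 = 1 := by simpa [add_comm] using hbl
  have hS := hx.fromBlocks_zero he
  have hfischer := hS.det_le_det_conj_mul_det_conj (conjTranspose_fromCols_rotation_mul_self hbl)
  have hA := (hS.conjTranspose_mul_mul_same_of_isometry
    (conjTranspose_fromRows_diagonal_mul_self hbl)).det_pos
  have hD := (hS.conjTranspose_mul_mul_same_of_isometry
    (conjTranspose_fromRows_diagonal_mul_self hlb)).det_pos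
  simp only [det_fromBlocks_zero₂₁, conjTranspose_fromRows_diagonal_mul_fromBlocks_mul,
    diagonal_neg_mul_mul_diagonal_neg] at hfischer hA hD
  have hlog := Real.log_le_log (mul_pos hx.det_pos he.det_pos) hfischer
  rw [Real.log_mul hx.det_pos.ne' he.det_pos.ne', Real.log_mul hA.ne' hD.ne'] at hlog
  linarith

theorem stmt2 {m : ℕ} (Sx Se : Matrix (Fin m) (Fin m) ℝ)
    (hx : Sx.PosDef) (he : Se.PosDef)
    (hxd : ∀ i, Sx i i = 1) (hed : ∀ i, Se i i = 1)
    (b l : Fin m → ℝ)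
    (hb : ∀ i, b i ∈ Set.Icc (-1 : ℝ) 1) (hl : ∀ i, l i ∈ Set.Icc (-1 : ℝ) 1)
    (hbl : ∀ i, b i ^ 2 + l i ^ 2 = 1) :
    0 ≤ - Real.log Sx.det - Real.log Se.det
      + Real.log (Matrix.diagonal b * Sx * Matrix.diagonal b
          + Matrix.diagonal l * Se * Matrix.diagonal l).det
      + Real.log (Matrix.diagonal l * Sx * Matrix.diagonal l
          + Matrix.diagonal b * Se * Matrix.diagonal b).det :=
  stmt2_general Sx Se hx he b l hbl
end

section
/- Let Σ_x, Σ̃_e ∈ ℝ^{m×m} be symmetric positive definite matrices and B, L ∈ ℝ^{m×m} diagonal matrices with B² + L² = I. Define A := B Σ_x B + L Σ̃_e L, C := L Σ_x L + B Σ̃_e B, and S := L Σ̃_e B − B Σ_x L. Then A is invertible and det(Σ_x) · det(Σ̃_e) = det(A) · det(C − Sᵀ A⁻¹ S). -/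
/-! With `U := [[B, L], [-L, B]]`, the relations `B² + L² = 1` and `BL = LB` make `U` orthogonal,
and `U · diag(Σ_x, Σ̃_e) · Uᵀ` is the block matrix `[[A, S], [Sᵀ, C]]`. This block matrix is
therefore positive definite, so is its corner `A`, and its determinant is `det Σ_x · det Σ̃_e`;
the Schur complement formula computes the same determinant as `det A · det (C - Sᵀ A⁻¹ S)`. -/

open Matrix

namespace Matrix

variable {n R : Type*} [Fintype n]

theorem IsDiag.commute [DecidableEq n] [CommSemiring R] {A B : Matrix n n R} (hA : A.IsDiag)
    (hB : B.IsDiag) : Commute A B := by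
  rw [← hA.diagonal_diag, ← hB.diagonal_diag]
  exact commute_diagonal _ _

section Rotation

variable [CommRing R] {B L : Matrix n n R}

theorem fromBlocks_rotation_mul_transpose [DecidableEq n] (hB : B.IsSymm) (hL : L.IsSymm)
    (hBL : Commute B L) (h : B * B + L * L = 1) :
    fromBlocks B L (-L) B * (fromBlocks B L (-L) B)ᵀ = 1 := by
  rw [fromBlocks_transpose, fromBlocks_multiply, hB.eq, hL.eq, transpose_neg, hL.eq,
    ← fromBlocks_one]
  congr 1 <;> simp only [Matrix.mul_neg, Matrix.neg_mul, neg_neg, hBL.eq] <;> grind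

theorem fromBlocks_rotation_conj (hB : B.IsSymm) (hL : L.IsSymm) {P Q : Matrix n n R}
    (hP : P.IsSymm) (hQ : Q.IsSymm) :
    fromBlocks B L (-L) B * fromBlocks P 0 0 Q * (fromBlocks B L (-L) B)ᵀ
      = fromBlocks (B * P * B + L * Q * L) (L * Q * B - B * P * L)
          (L * Q * B - B * P * L)ᵀ (L * P * L + B * Q * B) := by
  rw [fromBlocks_transpose, fromBlocks_multiply, fromBlocks_multiply, hB.eq, hL.eq,
    transpose_neg, hL.eq, transpose_sub, transpose_mul, transpose_mul, transpose_mul,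
    transpose_mul, hB.eq, hL.eq, hP.eq, hQ.eq]
  congr 1 <;> simp only [Matrix.mul_neg, Matrix.neg_mul, Matrix.mul_zero, add_zero, zero_add,
    Matrix.mul_assoc] <;> abel

end Rotation

open scoped ComplexOrder in
theorem PosDef.fromBlocks_zero_s6 {m 𝕜 : Type*} [Fintype m] [DecidableEq m] [DecidableEq n]
    [RCLike 𝕜] {P : Matrix m m 𝕜} {Q : Matrix n n 𝕜} (hP : P.PosDef) (hQ : Q.PosDef) :
    (fromBlocks P 0 0 Q).PosDef := by
  have := hP.isUnit.invertible
  have hsemi : (fromBlocks P 0 0 Q).PosSemidef := by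
    simpa using (hP.fromBlocks₁₁ 0 Q).mpr (by simpa using hQ.posSemidef)
  rw [hsemi.posDef_iff_det_ne_zero, det_fromBlocks_zero₂₁]
  exact mul_ne_zero hP.det_pos.ne' hQ.det_pos.ne'

end Matrix

theorem stmt6 {m : ℕ} (Sx Se B L : Matrix (Fin m) (Fin m) ℝ)
    (hSx : Sx.PosDef) (hSe : Se.PosDef) (hB : B.IsDiag) (hL : L.IsDiag)
    (hBL : B * B + L * L = 1) :
    IsUnit (B * Sx * B + L * Se * L).det ∧
    Sx.det * Se.det
      = (B * Sx * B + L * Se * L).det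
        * ((L * Sx * L + B * Se * B)
            - (L * Se * B - B * Sx * L)ᵀ * (B * Sx * B + L * Se * L)⁻¹
              * (L * Se * B - B * Sx * L)).det := by
  have hU := fromBlocks_rotation_mul_transpose hB.isSymm hL.isSymm (hB.commute hL) hBL
  have hconj := fromBlocks_rotation_conj (P := Sx) (Q := Se) hB.isSymm hL.isSymm
    hSx.isHermitian hSe.isHermitian
  have hM := (hSx.fromBlocks_zero_s6 hSe).mul_mul_conjTranspose_same
    (vecMul_injective_of_isUnit (.of_mul_eq_one _ hU))
  rw [conjTranspose_eq_transpose_of_trivial, hconj] at hM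
  have hA : (B * Sx * B + L * Se * L).PosDef := hM.submatrix Sum.inl_injective
  have := hA.isUnit.invertible
  refine ⟨(isUnit_iff_isUnit_det _).mp hA.isUnit, ?_⟩
  rw [← invOf_eq_nonsing_inv, ← det_fromBlocks₁₁, ← hconj, det_mul, det_mul, det_transpose,
    det_fromBlocks_zero₂₁]
  have hdetU := congrArg det hU
  rw [det_mul, det_transpose, det_one] at hdetU
  linear_combination -(Sx.det * Se.det) * hdetU
end

section
/- Let Σ_x and Σ̃_e be m × m real symmetric matrices with all diagonal entries equal to 1, and let b₁, …, b_m ∈ [−1, 1] and l₁, …, l_m > 0 satisfy b_i² + l_i² = 1 for all i. Suppose that l_i b_j (Σ̃_e)_{ij} = b_i l_j (Σ_x)_{ij} holds for all i, j. Then for any pair (i, j) with b_i ≠ 0, b_j ≠ 0, and ((Σ_x)_{ij} ≠ 0 or (Σ̃_e)_{ij} ≠ 0), one has |b_i| = |b_j|, l_i = l_j, and |(Σ̃_e)_{ij}| = |(Σ_x)_{ij}|. -/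
open Matrix

theorem stmt9 {m : ℕ} (Sx Se : Matrix (Fin m) (Fin m) ℝ)
    (hSx : Sx.IsSymm) (hSe : Se.IsSymm)
    (hxd : ∀ i, Sx i i = 1) (hed : ∀ i, Se i i = 1)
    (b l : Fin m → ℝ)
    (hb : ∀ i, b i ∈ Set.Icc (-1 : ℝ) 1) (hl : ∀ i, 0 < l i)
    (hbl : ∀ i, b i ^ 2 + l i ^ 2 = 1)
    (heq : ∀ i j, l i * b j * Se i j = b i * l j * Sx i j) :
    ∀ i j, b i ≠ 0 → b j ≠ 0 → (Sx i j ≠ 0 ∨ Se i j ≠ 0) →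
      |b i| = |b j| ∧ l i = l j ∧ |Se i j| = |Sx i j| := by
  intro i j hbi hbj hne
  have hsx : Sx j i = Sx i j := by
    have := congrFun (congrFun hSx i) j
    simpa [Matrix.transpose_apply] using this
  have hse : Se j i = Se i j := by
    have := congrFun (congrFun hSe i) j
    simpa [Matrix.transpose_apply] using this
  have e1 := heq i j
  have e2 := heq j i
  rw [hsx, hse] at e2
  have hli := hl i
  have hlj := hl j
  have hne' : l i * l j * b i * b j ≠ 0 := by positivity
  have hSe2 : Se i j ^ 2 = Sx i j ^ 2 := by
    have hprod : (l i * b j * Se i j) * (l j * b i * Se i j)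
        = (b i * l j * Sx i j) * (b j * l i * Sx i j) := by rw [e1, e2]
    apply mul_left_cancel₀ hne'
    linear_combination hprod
  have hsx0 : Sx i j ≠ 0 ∧ Se i j ≠ 0 := by
    rcases hne with h | h
    · refine ⟨h, fun h0 => h ?_⟩
      have : Sx i j ^ 2 = 0 := by rw [← hSe2, h0]; ring
      exact pow_eq_zero_iff (by norm_num) |>.mp this
    · refine ⟨fun h0 => h ?_, h⟩
      have : Se i j ^ 2 = 0 := by rw [hSe2, h0]; ring
      exact pow_eq_zero_iff (by norm_num) |>.mp this
  have habs : |Se i j| = |Sx i j| := by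
    rcases sq_eq_sq_iff_eq_or_eq_neg.mp hSe2 with h | h
    · rw [h]
    · rw [h, abs_neg]
  have hkey : l i ^ 2 * b j ^ 2 = l j ^ 2 * b i ^ 2 := by
    have h1 : (l i * b j * Se i j) * (b j * l i) = (b i * l j * Sx i j) * (b j * l i) := by
      rw [e1]
    have h2 : (l j * b i * Se i j) * (b i * l j) = (b j * l i * Sx i j) * (b i * l j) := by
      rw [e2]
    have h3 : (l i ^ 2 * b j ^ 2 - l j ^ 2 * b i ^ 2) * Se i j = 0 := by
      linear_combination h1 - h2
    have := mul_eq_zero.mp h3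
    rcases this with h | h
    · linarith
    · exact absurd h hsx0.2
  have hb2 : b i ^ 2 = b j ^ 2 := by
    have h1 := hbl i
    have h2 := hbl j
    nlinarith [sq_nonneg (b i), sq_nonneg (b j)]
  have habsb : |b i| = |b j| := by
    rcases sq_eq_sq_iff_eq_or_eq_neg.mp hb2 with h | h
    · rw [h]
    · rw [h, abs_neg]
  have hll : l i = l j := by
    have h1 := hbl i
    have h2 := hbl j
    nlinarith
  exact ⟨habsb, hll, habs⟩
end

section
/- Let P, P̄ ∈ ℝ^{p×p} be permutation matrices and, for i = 1, …, m, let Tⁱ, T̄ⁱ ∈ ℝ^{p×p} be strictly lower triangular matrices such that Pᵀ Tⁱ P = P̄ᵀ T̄ⁱ P̄ for all i. Assume that every entry strictly below the diagonal of the union matrix T̄^U := Σ_{i=1}^m abs(T̄ⁱ) is nonzero, where abs denotes the entrywise absolute value. Then P = P̄ and Tⁱ = T̄ⁱ for all i = 1, …, m. -/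
/-!
Write `P = σ.permMatrix ℝ` and `P̄ = τ.permMatrix ℝ`. Conjugating by a permutation matrix
relabels rows and columns simultaneously, so `Tⁱ k l = T̄ⁱ (π k) (π l)` for `π = τ⁻¹ σ`.
If `k ≤ l` but `π l < π k`, the entry `(π k, π l)` would vanish in every `T̄ⁱ` (because
`Tⁱ` is strictly lower triangular), contradicting the density of `T̄^U`. Hence `π` is monotone,
and the only monotone permutation of `Fin p` is the identity.
-/

open Matrix

theorem Equiv.Perm.permMatrix_transpose_mul_mul_permMatrix {n R : Type*} [Fintype n]
    [DecidableEq n] [NonAssocSemiring R] (σ : Equiv.Perm n) (M : Matrix n n R) :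
    (σ.permMatrix R)ᵀ * M * σ.permMatrix R = M.submatrix σ.symm σ.symm := by
  rw [transpose_permMatrix, Equiv.Perm.permMatrix, Equiv.Perm.permMatrix,
    PEquiv.toMatrix_toPEquiv_mul, PEquiv.mul_toMatrix_toPEquiv, submatrix_submatrix]
  rfl

theorem Equiv.Perm.eq_one_of_monotone {α : Type*} [LinearOrder α] [WellFoundedLT α]
    (π : Equiv.Perm α) (hπ : Monotone π) : π = 1 := by
  have hiso : (hπ.strictMono_of_injective π.injective).orderIsoOfSurjective π π.surjective
      = OrderIso.refl α :=
    Subsingleton.elim _ _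
  exact Equiv.ext fun a => DFunLike.congr_fun hiso a

theorem monotone_of_reindex_strictLowerTriangular {ι α R : Type*} [LinearOrder α] [Zero R]
    {T Tbar : ι → Matrix α α R} {π : α → α} (hreindex : ∀ i k l, T i k l = Tbar i (π k) (π l))
    (hT : ∀ i, ∀ k l, k ≤ l → T i k l = 0) (hdense : ∀ k l, l < k → ∃ i, Tbar i k l ≠ 0) :
    Monotone π := by
  intro k l hkl
  by_contra! hlt
  obtain ⟨i, hi⟩ := hdense (π k) (π l) hlt
  exact hi (hreindex i k l ▸ hT i k l hkl)

theorem stmt14_general {p n : ℕ} (P Pbar : Matrix (Fin p) (Fin p) ℝ)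
    (hP : ∃ σ : Equiv.Perm (Fin p), P = σ.permMatrix ℝ)
    (hPbar : ∃ σ : Equiv.Perm (Fin p), Pbar = σ.permMatrix ℝ)
    (T Tbar : Fin n → Matrix (Fin p) (Fin p) ℝ)
    (hT : ∀ i, ∀ k l : Fin p, k ≤ l → T i k l = 0)
    (hdense : ∀ k l : Fin p, l < k →
      (∑ i, Matrix.of fun k' l' => |Tbar i k' l'|) k l ≠ 0)
    (h : ∀ i, Pᵀ * T i * P = Pbarᵀ * Tbar i * Pbar) :
    P = Pbar ∧ ∀ i, T i = Tbar i := by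
  obtain ⟨σ, rfl⟩ := hP
  obtain ⟨τ, rfl⟩ := hPbar
  have hreindex : ∀ i k l, T i k l = Tbar i ((σ.trans τ.symm) k) ((σ.trans τ.symm) l) := by
    intro i k l
    have hikl := congr_fun₂ (h i) (σ k) (σ l)
    rw [Equiv.Perm.permMatrix_transpose_mul_mul_permMatrix,
      Equiv.Perm.permMatrix_transpose_mul_mul_permMatrix] at hikl
    simpa using hikl
  have hdense' : ∀ k l : Fin p, l < k → ∃ i, Tbar i k l ≠ 0 := by
    intro k l hlk
    by_contra! hzero
    exact hdense k l hlk (by simp [Matrix.sum_apply, hzero])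
  have hπ : σ.trans τ.symm = 1 := Equiv.Perm.eq_one_of_monotone _
    (monotone_of_reindex_strictLowerTriangular hreindex hT hdense')
  have hστ : σ = τ := Equiv.ext fun k => (τ.symm_apply_eq).mp (DFunLike.congr_fun hπ k)
  subst hστ
  refine ⟨rfl, fun i => Matrix.ext fun k l => ?_⟩
  simpa [hπ] using hreindex i k l

theorem stmt14 {p n : ℕ} (P Pbar : Matrix (Fin p) (Fin p) ℝ)
    (hP : ∃ σ : Equiv.Perm (Fin p), P = σ.permMatrix ℝ)
    (hPbar : ∃ σ : Equiv.Perm (Fin p), Pbar = σ.permMatrix ℝ)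
    (T Tbar : Fin n → Matrix (Fin p) (Fin p) ℝ)
    (hT : ∀ i, ∀ k l : Fin p, k ≤ l → T i k l = 0)
    (hTbar : ∀ i, ∀ k l : Fin p, k ≤ l → Tbar i k l = 0)
    (hdense : ∀ k l : Fin p, l < k →
      (∑ i, Matrix.of fun k' l' => |Tbar i k' l'|) k l ≠ 0)
    (h : ∀ i, Pᵀ * T i * P = Pbarᵀ * Tbar i * Pbar) :
    P = Pbar ∧ ∀ i, T i = Tbar i :=
  stmt14_general P Pbar hP hPbar T Tbar hT hdense h
end
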